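/- arXiv:2503.14914 — 2 statements merged into one kernel-verified Lean document; each statement's English description precedes it below -/
import Mathlib

section
/- Let a_ξ, b_ξ (ξ ∈ ℤⁿ, n ≥ 2) be complex numbers such that for every decomposition ξ = ξ₁ + ξ₂ with ξ₁, ξ₂ ∈ ℤⁿ∖{0} one has ((1 − exp(−4π²T(|ξ₁|² + |ξ₂|²)))/(4π²(|ξ₁|² + |ξ₂|²)))·a_ξ + exp(−4π²T(|ξ₁|² + |ξ₂|²))·b_ξ = 0. Then a_ξ = b_ξ = 0 for every ξ ∈ ℤⁿ admitting two decompositions ξ = ξ₁+ξ₂ = ξ₁′+ξ₂′ with ξ₁,ξ₂,ξ₁′,ξ₂′ ∈ ℤⁿ∖{0} and |ξ₁|²+|ξ₂|² ≠ |ξ₁′|²+|ξ₂′|². -/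
/-! Dividing the relation for a decomposition with `s = |ξ₁|² + |ξ₂|²` by `e^{-4π²Ts}` turns it
into `(e^{4π²Ts} - 1)/(4π²s) · a_ξ + b_ξ = 0`. The slope `s ↦ (e^{cs} - 1)/s` of the convex
function `exp` is strictly increasing, so two decompositions with different `s` give two
independent linear relations between `a_ξ` and `b_ξ`. -/

/-- Squared Euclidean norm of an integer frequency vector. -/
noncomputable def nsq {n : ℕ} (ξ : Fin n → ℤ) : ℝ := ∑ i : Fin n, ((ξ i : ℝ))^2

open Real

lemma nsq_pos {n : ℕ} {ξ : Fin n → ℤ} (hξ : ξ ≠ 0) : 0 < nsq ξ := by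
  obtain ⟨i, hi⟩ := Function.ne_iff.mp hξ
  exact Finset.sum_pos' (fun _ _ => sq_nonneg _)
    ⟨i, Finset.mem_univ i, sq_pos_of_ne_zero (Int.cast_ne_zero.mpr hi)⟩

lemma strictMonoOn_exp_mul_sub_one_div {c : ℝ} (hc : 0 < c) :
    StrictMonoOn (fun s => (exp (c * s) - 1) / s) (Set.Ioi 0) := by
  intro s (hs : 0 < s) t (ht : 0 < t) hst
  have slope := strictConvexOn_exp.secant_strict_mono (a := 0) (Set.mem_univ _) (Set.mem_univ _)
    (Set.mem_univ _) (mul_pos hc hs).ne' (mul_pos hc ht).ne' (mul_lt_mul_of_pos_left hst hc)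
  simp only [exp_zero, sub_zero] at slope
  have rescale : ∀ u : ℝ, 0 < u → (exp (c * u) - 1) / u = c * ((exp (c * u) - 1) / (c * u)) :=
    fun u hu => by field_simp
  simpa only [rescale s hs, rescale t ht] using mul_lt_mul_of_pos_left slope hc

lemma heat_coeff_det_ne_zero {c k s t : ℝ} (hc : c < 0) (hk : k ≠ 0) (hs : 0 < s) (ht : 0 < t)
    (hst : s ≠ t) :
    (1 - exp (c * s)) / (k * s) * exp (c * t) - (1 - exp (c * t)) / (k * t) * exp (c * s) ≠ 0 := by
  have slope_ne : (exp (-c * s) - 1) / s ≠ (exp (-c * t) - 1) / t :=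
    ((strictMonoOn_exp_mul_sub_one_div (neg_pos.mpr hc)).injOn).ne hs ht hst
  have factor :
      (1 - exp (c * s)) / (k * s) * exp (c * t) - (1 - exp (c * t)) / (k * t) * exp (c * s)
        = exp (c * s) * exp (c * t) / k * ((exp (-c * s) - 1) / s - (exp (-c * t) - 1) / t) := by
    simp only [neg_mul, exp_neg]
    field_simp
  rw [factor]
  exact mul_ne_zero (by positivity) (sub_ne_zero.mpr slope_ne)

lemma eq_zero_of_two_relations {K : Type*} [Field K] {p q p' q' x y : K}
    (hdet : p * q' - p' * q ≠ 0) (h : p * x + q * y = 0) (h' : p' * x + q' * y = 0) :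
    x = 0 ∧ y = 0 := by
  have hx : (p * q' - p' * q) * x = 0 := by linear_combination q' * h - q * h'
  have hy : (p * q' - p' * q) * y = 0 := by linear_combination p * h' - p' * h
  exact ⟨(mul_eq_zero.mp hx).resolve_left hdet, (mul_eq_zero.mp hy).resolve_left hdet⟩

theorem stmt_4_general (n : ℕ) (T : ℝ) (hT : 0 < T)
    (a b : (Fin n → ℤ) → ℂ)
    (h : ∀ ξ ξ₁ ξ₂ : Fin n → ℤ, ξ₁ ≠ 0 → ξ₂ ≠ 0 → ξ = ξ₁ + ξ₂ →
      (((1 - Real.exp (-4 * Real.pi^2 * T * (nsq ξ₁ + nsq ξ₂))) /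
          (4 * Real.pi^2 * (nsq ξ₁ + nsq ξ₂)) : ℝ) : ℂ) * a ξ
        + ((Real.exp (-4 * Real.pi^2 * T * (nsq ξ₁ + nsq ξ₂)) : ℝ) : ℂ) * b ξ = 0) :
    ∀ ξ : Fin n → ℤ,
      (∃ ξ₁ ξ₂ ξ₁' ξ₂' : Fin n → ℤ, ξ₁ ≠ 0 ∧ ξ₂ ≠ 0 ∧ ξ₁' ≠ 0 ∧ ξ₂' ≠ 0 ∧
        ξ = ξ₁ + ξ₂ ∧ ξ = ξ₁' + ξ₂' ∧ nsq ξ₁ + nsq ξ₂ ≠ nsq ξ₁' + nsq ξ₂') →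
      a ξ = 0 ∧ b ξ = 0 := by
  rintro ξ ⟨ξ₁, ξ₂, ξ₁', ξ₂', h₁, h₂, h₁', h₂', hξ, hξ', hne⟩
  have hdet := heat_coeff_det_ne_zero (c := -4 * π ^ 2 * T) (k := 4 * π ^ 2)
    (by linarith [mul_pos (pow_pos pi_pos 2) hT]) (by positivity)
    (add_pos (nsq_pos h₁) (nsq_pos h₂)) (add_pos (nsq_pos h₁') (nsq_pos h₂')) hne
  refine eq_zero_of_two_relations ?_ (h ξ ξ₁ ξ₂ h₁ h₂ hξ) (h ξ ξ₁' ξ₂' h₁' h₂' hξ')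
  exact_mod_cast hdet

/-- if the complex numbers `a_ξ, b_ξ` satisfy, for every decomposition
`ξ = ξ₁ + ξ₂` with `ξ₁, ξ₂ ∈ ℤⁿ∖{0}`, the relation
`((1 − e^{−4π²T(|ξ₁|²+|ξ₂|²)})/(4π²(|ξ₁|²+|ξ₂|²)))·a_ξ + e^{−4π²T(|ξ₁|²+|ξ₂|²)}·b_ξ = 0`,
then `a_ξ = b_ξ = 0` for every `ξ` admitting two decompositions with different values of
`|ξ₁|² + |ξ₂|²`. -/
theorem stmt_4 (n : ℕ) (hn : 2 ≤ n) (T : ℝ) (hT : 0 < T)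
    (a b : (Fin n → ℤ) → ℂ)
    (h : ∀ ξ ξ₁ ξ₂ : Fin n → ℤ, ξ₁ ≠ 0 → ξ₂ ≠ 0 → ξ = ξ₁ + ξ₂ →
      (((1 - Real.exp (-4 * Real.pi^2 * T * (nsq ξ₁ + nsq ξ₂))) /
          (4 * Real.pi^2 * (nsq ξ₁ + nsq ξ₂)) : ℝ) : ℂ) * a ξ
        + ((Real.exp (-4 * Real.pi^2 * T * (nsq ξ₁ + nsq ξ₂)) : ℝ) : ℂ) * b ξ = 0) :
    ∀ ξ : Fin n → ℤ,
      (∃ ξ₁ ξ₂ ξ₁' ξ₂' : Fin n → ℤ, ξ₁ ≠ 0 ∧ ξ₂ ≠ 0 ∧ ξ₁' ≠ 0 ∧ ξ₂' ≠ 0 ∧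
        ξ = ξ₁ + ξ₂ ∧ ξ = ξ₁' + ξ₂' ∧ nsq ξ₁ + nsq ξ₂ ≠ nsq ξ₁' + nsq ξ₂') →
      a ξ = 0 ∧ b ξ = 0 :=
  stmt_4_general n T hT a b h
end

section
/- Let β > 0 and c ≥ 0 be real numbers, set λ = √(β² + cβ) and k = β − λ. Then k ≤ 0, c + k ≥ 0, and k + (c+k)β/λ = 0. Consequently, if m̄ : Ω → ℝ satisfies −Δm̄ = β m̄ with Neumann boundary condition, then the pair (u,m) with u(x,t) = ((c+k)/λ)·e^{−λt}·m̄(x) and m(x,t) = e^{−λt}·m̄(x) solves the coupled system −∂_t u − Δu = c·m and ∂_t m − Δm − Δu = 0 in Ω × (0,T), with ∂_ν u = ∂_ν m = 0 on ∂Ω × (0,T). -/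
/-!
Write `λ = √(β² + cβ)` and `k = β - λ`. Since `β² ≤ λ² ≤ (β + c)²` we get `β ≤ λ ≤ β + c`, i.e.
`k ≤ 0 ≤ c + k`, and multiplying `k + (c + k)β/λ` by `λ` gives `β² + cβ - λ² = 0`.
For the PDE, both `u` and `m` are `e^{-λt}m̄` up to constant factors, so `∂ₜ` acts as `-λ` and, by the
eigenvalue equation, `Δ` acts as `-β`; the two equations reduce to `A(λ + β) = c` and
`-λ + β + Aβ = 0` for `A = (c + k)/λ`, both of which are the identity above.
-/

/-- Partial derivative in the `i`-th coordinate direction. -/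
noncomputable def pd {n : ℕ} (i : Fin n) (f : (Fin n → ℝ) → ℝ) (x : Fin n → ℝ) : ℝ :=
  deriv (fun s => f (Function.update x i s)) (x i)

/-- Laplacian (sum of repeated coordinate partials). -/
noncomputable def lap {n : ℕ} (f : (Fin n → ℝ) → ℝ) (x : Fin n → ℝ) : ℝ :=
  ∑ i : Fin n, pd i (fun y => pd i f y) x

lemma pd_const_mul {n : ℕ} (i : Fin n) (C : ℝ) (f : (Fin n → ℝ) → ℝ) (x : Fin n → ℝ) :
    pd i (fun y => C * f y) x = C * pd i f x :=
  deriv_const_mul_field C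

lemma lap_const_mul {n : ℕ} (C : ℝ) (f : (Fin n → ℝ) → ℝ) (x : Fin n → ℝ) :
    lap (fun y => C * f y) x = C * lap f x := by
  simp only [lap, pd_const_mul, Finset.mul_sum]

lemma hasDerivAt_exp_neg_mul (L t : ℝ) :
    HasDerivAt (fun s => Real.exp (-L * s)) (Real.exp (-L * t) * -L) t :=
  (hasDerivAt_const_mul (-L)).exp

lemma sub_add_add_sub_mul_div_eq_zero {β c L : ℝ} (hL : L ≠ 0) (hLsq : L ^ 2 = β ^ 2 + c * β) :
    (β - L) + (c + (β - L)) * β / L = 0 := by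
  field_simp
  linear_combination -hLsq

theorem stmt_6_general (n : ℕ) (Ω : Set (Fin n → ℝ)) (T : ℝ)
    (β c : ℝ) (hβ : 0 < β) (hc : 0 ≤ c)
    (mbar : (Fin n → ℝ) → ℝ)
    (heig : ∀ x ∈ Ω, -(lap mbar x) = β * mbar x) :
    Real.sqrt (β^2 + c*β) > 0 ∧
    β - Real.sqrt (β^2 + c*β) ≤ 0 ∧
    0 ≤ c + (β - Real.sqrt (β^2 + c*β)) ∧
    (β - Real.sqrt (β^2 + c*β))
      + (c + (β - Real.sqrt (β^2 + c*β))) * β / Real.sqrt (β^2 + c*β) = 0 ∧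
    (∀ u m : (Fin n → ℝ) → ℝ → ℝ,
      u = (fun (y : Fin n → ℝ) (s : ℝ) =>
        ((c + (β - Real.sqrt (β^2 + c*β))) / Real.sqrt (β^2 + c*β))
          * Real.exp (-(Real.sqrt (β^2 + c*β)) * s) * mbar y) →
      m = (fun (y : Fin n → ℝ) (s : ℝ) =>
        Real.exp (-(Real.sqrt (β^2 + c*β)) * s) * mbar y) →
      ∀ x ∈ Ω, ∀ t ∈ Set.Ioo (0:ℝ) T,
        (-(deriv (fun s => u x s) t) - lap (fun y => u y t) x = c * m x t) ∧
        (deriv (fun s => m x s) t - lap (fun y => m y t) x - lap (fun y => u y t) x = 0)) := by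
  have hdisc : 0 < β ^ 2 + c * β := by positivity
  set L := Real.sqrt (β ^ 2 + c * β)
  have hL : 0 < L := Real.sqrt_pos.mpr hdisc
  have hLsq : L ^ 2 = β ^ 2 + c * β := Real.sq_sqrt hdisc.le
  have hβL : β ≤ L := (Real.le_sqrt hβ.le hdisc.le).mpr (by nlinarith)
  have hLβc : L ≤ β + c := (Real.sqrt_le_left (by positivity)).mpr (by nlinarith)
  have hkey := sub_add_add_sub_mul_div_eq_zero hL.ne' hLsq
  refine ⟨hL, by linarith, by linarith, hkey, ?_⟩
  rintro u m rfl rfl x hx t -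
  set A := (c + (β - L)) / L
  have hAL : A * L = c + (β - L) := div_mul_cancel₀ _ hL.ne'
  have hlap : lap mbar x = -(β * mbar x) := by linarith [heig x hx]
  have hdm := ((hasDerivAt_exp_neg_mul L t).mul_const (mbar x)).deriv
  have hdu := (((hasDerivAt_exp_neg_mul L t).const_mul A).mul_const (mbar x)).deriv
  simp only [hdm, hdu, lap_const_mul, hlap]
  constructor
  · linear_combination Real.exp (-L * t) * mbar x * (hAL + hkey)
  · linear_combination Real.exp (-L * t) * mbar x * hkey

/-- for `β > 0`, `c ≥ 0`, `λ = √(β² + cβ)` and `k = β − λ` one has `k ≤ 0`,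
`c + k ≥ 0` and `k + (c+k)β/λ = 0`; consequently, if `−Δm̄ = β m̄` on `Ω` then
`u(x,t) = ((c+k)/λ)e^{−λt}m̄(x)` and `m(x,t) = e^{−λt}m̄(x)` solve
`−∂_t u − Δu = c·m` and `∂_t m − Δm − Δu = 0` on `Ω × (0,T)`. -/
theorem stmt_6 (n : ℕ) (Ω : Set (Fin n → ℝ)) (T : ℝ) (hT : 0 < T)
    (β c : ℝ) (hβ : 0 < β) (hc : 0 ≤ c)
    (mbar : (Fin n → ℝ) → ℝ) (hmbar : ContDiff ℝ 2 mbar)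
    (heig : ∀ x ∈ Ω, -(lap mbar x) = β * mbar x) :
    Real.sqrt (β^2 + c*β) > 0 ∧
    β - Real.sqrt (β^2 + c*β) ≤ 0 ∧
    0 ≤ c + (β - Real.sqrt (β^2 + c*β)) ∧
    (β - Real.sqrt (β^2 + c*β))
      + (c + (β - Real.sqrt (β^2 + c*β))) * β / Real.sqrt (β^2 + c*β) = 0 ∧
    (∀ u m : (Fin n → ℝ) → ℝ → ℝ,
      u = (fun (y : Fin n → ℝ) (s : ℝ) =>
        ((c + (β - Real.sqrt (β^2 + c*β))) / Real.sqrt (β^2 + c*β))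
          * Real.exp (-(Real.sqrt (β^2 + c*β)) * s) * mbar y) →
      m = (fun (y : Fin n → ℝ) (s : ℝ) =>
        Real.exp (-(Real.sqrt (β^2 + c*β)) * s) * mbar y) →
      ∀ x ∈ Ω, ∀ t ∈ Set.Ioo (0:ℝ) T,
        (-(deriv (fun s => u x s) t) - lap (fun y => u y t) x = c * m x t) ∧
        (deriv (fun s => m x s) t - lap (fun y => m y t) x - lap (fun y => u y t) x = 0)) :=
  stmt_6_general n Ω T β c hβ hc mbar heig
end
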